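/- For any two n×n complex matrices B and C, the symmetrized Strang product converges to the exponential of the sum: lim_{N→∞} (e^{B/(2N)} e^{C/N} e^{B/(2N)})^N = e^{B+C}. -/

import Mathlib

/-!
If `N • (a N - 1) → A` then `a N ^ N → exp A`: near `1` we can write `a N = exp (log (a N))`
with `log` the local inverse of `exp`, whose derivative at `1` is the identity, so
`N • log (a N) → A` and `a N ^ N = exp (N • log (a N))`. The Strang factor
`S t = exp (t/2 • B) * exp (t • C) * exp (t/2 • B)` has `S 0 = 1` and `S' 0 = B + C`,
hence `N • (S (1/N) - 1) → B + C`.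
-/

open NormedSpace Filter Topology Asymptotics

section Derivative

variable {𝕜 ι E F : Type*} [NontriviallyNormedField 𝕜] [NormedAddCommGroup E] [NormedSpace 𝕜 E]
  [NormedAddCommGroup F] [NormedSpace 𝕜 F]

theorem HasFDerivAt.tendsto_smul_sub_comp {g : E → F} {g' : E →L[𝕜] F} {x : E}
    (hg : HasFDerivAt g g' x) {l : Filter ι} {c : ι → 𝕜} {u : ι → E} {v : E}
    (hux : Tendsto u l (𝓝 x)) (hu : Tendsto (fun i => c i • (u i - x)) l (𝓝 v)) :
    Tendsto (fun i => c i • (g (u i) - g x)) l (𝓝 (g' v)) := by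
  have hrem : (fun i => c i • (g (u i) - g x - g' (u i - x))) =o[l] (fun _ => (1 : ℝ)) :=
    ((isBigO_refl c l).smul_isLittleO (hg.isLittleO.comp_tendsto hux)).trans_isBigO
      (hu.isBigO_one ℝ)
  have := ((isLittleO_one_iff ℝ).mp hrem).add ((g'.continuous.tendsto v).comp hu)
  rw [zero_add] at this
  refine this.congr fun i => ?_
  simp [smul_sub, map_smul]

theorem tendsto_of_tendsto_natCast_smul_sub {𝕂 : Type*} [RCLike 𝕂] [NormedSpace 𝕂 E]
    {u : ℕ → E} {x v : E}
    (hu : Tendsto (fun N : ℕ => (N : 𝕂) • (u N - x)) atTop (𝓝 v)) :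
    Tendsto u atTop (𝓝 x) := by
  have h := (tendsto_inv_atTop_nhds_zero_nat (𝕜 := 𝕂)).smul hu
  rw [zero_smul] at h
  rw [← tendsto_sub_nhds_zero_iff]
  refine h.congr' ?_
  filter_upwards [eventually_ne_atTop 0] with N hN
  rw [smul_smul, inv_mul_cancel₀ (Nat.cast_ne_zero.mpr hN), one_smul]

end Derivative

section Exponential

variable {𝕂 𝔸 : Type*} [RCLike 𝕂] [NormedRing 𝔸] [NormedAlgebra 𝕂 𝔸]

noncomputable def strangSplitting (a b : 𝔸) (t : 𝕂) : 𝔸 :=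
  exp ((t / 2) • a) * exp (t • b) * exp ((t / 2) • a)

theorem strangSplitting_zero (a b : 𝔸) : strangSplitting a b (0 : 𝕂) = 1 := by
  simp [strangSplitting]

variable [CompleteSpace 𝔸]

theorem tendsto_pow_of_tendsto_natCast_smul_sub_one {a : ℕ → 𝔸} {A : 𝔸}
    (ha : Tendsto (fun N : ℕ => (N : 𝕂) • (a N - 1)) atTop (𝓝 A)) :
    Tendsto (fun N : ℕ => a N ^ N) atTop (𝓝 (exp A)) := by
  let : NormedAlgebra ℚ 𝔸 := NormedAlgebra.restrictScalars ℚ 𝕂 𝔸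
  have hexp : HasStrictFDerivAt exp
      ((ContinuousLinearEquiv.refl 𝕂 𝔸 : 𝔸 ≃L[𝕂] 𝔸) : 𝔸 →L[𝕂] 𝔸) 0 :=
    hasStrictFDerivAt_exp_zero
  set log := hexp.localInverse _ _ _
  have hlog : HasFDerivAt log (ContinuousLinearMap.id 𝕂 𝔸) 1 := by
    simpa [exp_zero] using hexp.to_localInverse.hasFDerivAt
  have hlog_one : log 1 = 0 := by simpa [exp_zero] using hexp.localInverse_apply_image
  have ha_one : Tendsto a atTop (𝓝 1) := tendsto_of_tendsto_natCast_smul_sub ha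
  have hlog_a : Tendsto (fun N : ℕ => (N : 𝕂) • log (a N)) atTop (𝓝 A) := by
    simpa [hlog_one] using hlog.tendsto_smul_sub_comp ha_one ha
  have hexp_log : ∀ᶠ N in atTop, exp (log (a N)) = a N :=
    ha_one.eventually (by simpa [exp_zero] using hexp.eventually_right_inverse)
  refine hlog_a.exp.congr' ?_
  filter_upwards [hexp_log] with N hN
  rw [Nat.cast_smul_eq_nsmul, exp_nsmul, hN]

theorem hasDerivAt_strangSplitting_zero (a b : 𝔸) :
    HasDerivAt (strangSplitting a b) (a + b) (0 : 𝕂) := by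
  have half : HasDerivAt (fun t : 𝕂 => exp ((t / 2) • a)) ((2 : 𝕂)⁻¹ • a) 0 := by
    simpa [div_eq_mul_inv, mul_smul] using hasDerivAt_exp_smul_const ((2 : 𝕂)⁻¹ • a) (0 : 𝕂)
  have whole : HasDerivAt (fun t : 𝕂 => exp (t • b)) b 0 := by
    simpa using hasDerivAt_exp_smul_const b (0 : 𝕂)
  refine ((half.mul whole).mul half).congr_deriv ?_
  simp only [zero_div, zero_smul, exp_zero, one_mul, mul_one, Pi.mul_apply]
  module

theorem tendsto_strangSplitting_pow (a b : 𝔸) :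
    Tendsto (fun N : ℕ => strangSplitting a b (N : 𝕂)⁻¹ ^ N) atTop (𝓝 (exp (a + b))) := by
  have hscale : Tendsto (fun N : ℕ => (N : 𝕂) • ((N : 𝕂)⁻¹ - 0)) atTop (𝓝 1) := by
    refine tendsto_const_nhds.congr' ?_
    filter_upwards [eventually_ne_atTop 0] with N hN
    rw [sub_zero, smul_eq_mul, mul_inv_cancel₀ (Nat.cast_ne_zero.mpr hN)]
  have hslope := (hasDerivAt_strangSplitting_zero a b).hasFDerivAt.tendsto_smul_sub_comp
    tendsto_inv_atTop_nhds_zero_nat hscale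
  refine tendsto_pow_of_tendsto_natCast_smul_sub_one (𝕂 := 𝕂) ?_
  simpa [strangSplitting_zero] using hslope

end Exponential

/-- Strang product formula: `(e^{B/(2N)} e^{C/N} e^{B/(2N)})^N → e^{B+C}` as `N → ∞`. -/
theorem strang_product_formula {n : ℕ} (B C : Matrix (Fin n) (Fin n) ℂ) :
    Tendsto
      (fun N : ℕ =>
        (exp ((1 / (2 * (N : ℂ))) • B) * exp ((1 / (N : ℂ)) • C) *
            exp ((1 / (2 * (N : ℂ))) • B)) ^ N)
      atTop (nhds (exp (B + C))) := by
  -- Any Banach-algebra norm will do: all norms induce the topology of the statement.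
  let : NormedRing (Matrix (Fin n) (Fin n) ℂ) := Matrix.linftyOpNormedRing
  let : NormedAlgebra ℂ (Matrix (Fin n) (Fin n) ℂ) := Matrix.linftyOpNormedAlgebra
  refine (tendsto_strangSplitting_pow (𝕂 := ℂ) B C).congr fun N => ?_
  rw [strangSplitting, one_div (N : ℂ), show (N : ℂ)⁻¹ / 2 = 1 / (2 * N) by ring]
  rfl
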